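/- AGM contraction postulate (K−2) fails for sceptical non-monotonic reasoning: there is a defeasible theory D and a contraction D−_a by a literal a (acting only on the superiority relation) such that BS^{+∂}(D−_a) ⊄ BS^{+∂}(D); concretely, with rules ⇒ a (r1), ⇒ ¬a (r2), ⇒ p (r3), a ⇒ ¬p (r4) and > = {(r1, r2)}, D proves +∂ a and −∂ p, while D−_a = (F, R, ∅) proves −∂ a and +∂ p. -/

import Mathlib

namespace DL

abbrev Atom := ℕ

/-- A literal: an atom with a polarity. -/
structure Lit where
  atom : Atom
  pos : Bool
deriving DecidableEq

/-- The complement `∼p` of a literal. -/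
def Lit.neg (l : Lit) : Lit := ⟨l.atom, !l.pos⟩

/-- A defeasible rule: a finite set of antecedent literals and a head literal. -/
structure Rule where
  ante : Finset Lit
  head : Lit
deriving DecidableEq

/-- A defeasible theory: facts, defeasible rules, and a superiority relation. -/
structure DTheory where
  facts : Finset Lit
  rules : Finset Rule
  sup : Rule → Rule → Prop

/-- A superiority relation is acyclic iff its transitive closure is irreflexive. -/
def Acyclic (sup : Rule → Rule → Prop) : Prop :=
  Irreflexive (Relation.TransGen sup)

def DTheory.FactsConsistent (D : DTheory) : Prop :=
  ∀ l ∈ D.facts, l.neg ∉ D.facts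

/-- Well-formedness of a defeasible theory: consistent facts, acyclic superiority
relation defined on the rules of the theory. -/
def DTheory.WellFormed (D : DTheory) : Prop :=
  D.FactsConsistent ∧ Acyclic D.sup ∧ ∀ r s, D.sup r s → r ∈ D.rules ∧ s ∈ D.rules

/-- Proof tags: Δ, Σ, σ, ω, φ, ∂. -/
inductive Tag | delta | Sig | sgm | omg | phi | prt
deriving DecidableEq

/-- A tagged literal: a tag, a sign (`true` = `+`, `false` = `−`), and a literal. -/
abbrev TLit := Tag × Bool × Lit

/-- The proof conditions of Defeasible Logic (defeasible rules only), relative to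
the preceding part `P` of a proof sequence. -/
def Cond (D : DTheory) (P : List TLit) : Tag → Bool → Lit → Prop
  | .delta, true, q => q ∈ D.facts
  | .delta, false, q => q ∉ D.facts
  | .Sig, true, q =>
      (Tag.delta, true, q) ∈ P ∨
      ∃ r ∈ D.rules, r.head = q ∧ ∀ a ∈ r.ante, (Tag.Sig, true, a) ∈ P
  | .Sig, false, q =>
      (Tag.delta, true, q) ∉ P ∧
      ∀ r ∈ D.rules, r.head = q → ∃ a ∈ r.ante, (Tag.Sig, false, a) ∈ P
  | .sgm, true, q =>
      (Tag.delta, true, q) ∈ P ∨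
      ∃ r ∈ D.rules, r.head = q ∧ (∀ a ∈ r.ante, (Tag.sgm, true, a) ∈ P) ∧
        ∀ s ∈ D.rules, s.head = q.neg →
          (∃ a ∈ s.ante, (Tag.prt, false, a) ∈ P) ∨ ¬ D.sup s r
  | .sgm, false, q =>
      (Tag.delta, true, q) ∉ P ∧
      ∀ r ∈ D.rules, r.head = q →
        (∃ a ∈ r.ante, (Tag.sgm, false, a) ∈ P) ∨
        ∃ s ∈ D.rules, s.head = q.neg ∧ (∀ a ∈ s.ante, (Tag.prt, true, a) ∈ P) ∧ D.sup s r
  | .omg, true, q =>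
      (Tag.delta, true, q) ∈ P ∨
      ∃ r ∈ D.rules, r.head = q ∧ ∀ a ∈ r.ante, (Tag.prt, true, a) ∈ P
  | .omg, false, q =>
      (Tag.delta, true, q) ∉ P ∧
      ∀ r ∈ D.rules, r.head = q → ∃ a ∈ r.ante, (Tag.prt, false, a) ∈ P
  | .phi, true, q =>
      (Tag.delta, true, q) ∈ P ∨
      ∃ r ∈ D.rules, r.head = q ∧ (∀ a ∈ r.ante, (Tag.phi, true, a) ∈ P) ∧
        ∀ s ∈ D.rules, s.head = q.neg → ∃ a ∈ s.ante, (Tag.Sig, false, a) ∈ P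
  | .phi, false, q =>
      (Tag.delta, true, q) ∉ P ∧
      ∀ r ∈ D.rules, r.head = q →
        (∃ a ∈ r.ante, (Tag.phi, false, a) ∈ P) ∨
        ∃ s ∈ D.rules, s.head = q.neg ∧ ∀ a ∈ s.ante, (Tag.Sig, true, a) ∈ P
  | .prt, true, q =>
      (Tag.delta, true, q) ∈ P ∨
      ((Tag.delta, false, q.neg) ∈ P ∧
       (∃ r ∈ D.rules, r.head = q ∧ ∀ a ∈ r.ante, (Tag.prt, true, a) ∈ P) ∧
       ∀ s ∈ D.rules, s.head = q.neg →
         (∃ a ∈ s.ante, (Tag.prt, false, a) ∈ P) ∨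
         ∃ t ∈ D.rules, t.head = q ∧ (∀ a ∈ t.ante, (Tag.prt, true, a) ∈ P) ∧ D.sup t s)
  | .prt, false, q =>
      (Tag.delta, true, q) ∉ P ∧
      ((Tag.delta, true, q.neg) ∈ P ∨
       (∀ r ∈ D.rules, r.head = q → ∃ a ∈ r.ante, (Tag.prt, false, a) ∈ P) ∨
       ∃ s ∈ D.rules, s.head = q.neg ∧ (∀ a ∈ s.ante, (Tag.prt, true, a) ∈ P) ∧
         ∀ t ∈ D.rules, t.head = q →
           (∃ a ∈ t.ante, (Tag.prt, false, a) ∈ P) ∨ ¬ D.sup t s)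

/-- A proof (derivation) is a finite sequence of tagged literals each of which
satisfies the proof condition relative to the preceding part of the sequence. -/
inductive ValidProof (D : DTheory) : List TLit → Prop
  | nil : ValidProof D []
  | snoc {P : List TLit} {t : Tag} {s : Bool} {q : Lit} :
      ValidProof D P → Cond D P t s q → ValidProof D (P ++ [(t, s, q)])

/-- `D ⊢ ±# q`: some valid proof in `D` contains the tagged literal. -/
def Proves (D : DTheory) (t : Tag) (s : Bool) (q : Lit) : Prop :=
  ∃ P, ValidProof D P ∧ (t, s, q) ∈ P

/-- A theory is consistent iff it never defeasibly proves both a literal and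
its complement. -/
def Consistent (D : DTheory) : Prop :=
  ∀ p : Lit, ¬ (Proves D .prt true p ∧ Proves D .prt true p.neg)

/-- `a` depends on `b` iff `b = a`, or for every rule for `a` either `b` is an
antecedent or some antecedent depends on `b` (least such relation,
impredicatively encoded). -/
def DependsOn (D : DTheory) (a b : Lit) : Prop :=
  ∀ S : Lit → Lit → Prop,
    (∀ x, S x x) →
    (∀ x y, (∀ r ∈ D.rules, r.head = x → y ∈ r.ante ∨ ∃ c ∈ r.ante, S c y) → S x y) →
    S a b

/-- `p` is ∂-unreachable iff every rule for `p` either has two antecedents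
depending on complementary literals or has a ∂-unreachable antecedent
(least such predicate, impredicatively encoded). -/
def Unreachable (D : DTheory) (p : Lit) : Prop :=
  ∀ S : Lit → Prop,
    (∀ x, (∀ r ∈ D.rules, r.head = x →
        (∃ l : Lit, ∃ a ∈ r.ante, ∃ b ∈ r.ante, DependsOn D a l ∧ DependsOn D b l.neg) ∨
        ∃ d ∈ r.ante, S d) → S x) →
    S p

/-- The literal `p` appears in the theory `D` (its atom occurs in `D`). -/
def AppearsIn (p : Lit) (D : DTheory) : Prop :=
  (∃ l ∈ D.facts, l.atom = p.atom) ∨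
  ∃ r ∈ D.rules, r.head.atom = p.atom ∨ ∃ l ∈ r.ante, l.atom = p.atom

/-- Positive part of the belief set of a defeasible theory. -/
def BSplus (D : DTheory) : Set Lit := {p | AppearsIn p D ∧ Proves D .prt true p}

/-- Negative part of the belief set of a defeasible theory. -/
def BSminus (D : DTheory) : Set Lit := {p | AppearsIn p D ∧ Proves D .prt false p}

/-- The belief set of a defeasible theory. -/
def BS (D : DTheory) : Set Lit := BSplus D ∪ BSminus D

/-- Edge of the atom dependency graph: from atom `a` to atom `b` whenever some
rule has head with atom `b` and an antecedent literal with atom `a`. -/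
def AtomEdge (D : DTheory) (a b : Atom) : Prop :=
  ∃ r ∈ D.rules, r.head.atom = b ∧ ∃ l ∈ r.ante, l.atom = a

/-- A theory is decisive iff every literal appearing in it is defeasibly
provable or defeasibly refuted. -/
def Decisive (D : DTheory) : Prop :=
  ∀ p : Lit, AppearsIn p D → Proves D .prt true p ∨ Proves D .prt false p

end DL

/-! In `D` the superiority `r1 > r2` lets `r1` win, so `+∂ a`; then `r4` is applicable and
`r3` cannot beat it, so `−∂ p`. With the empty superiority relation the two rules for `a` block
each other, so `−∂ a`; this discards `r4`, and `+∂ p` follows. That `D` never proves `+∂ p` is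
an invariant of its proofs: none of `+Δ ∼a`, `+Δ p`, `−∂ a`, `+∂ p` can be the first of these
four to occur in a proof. -/

namespace DL

theorem ValidProof.forall_not_of_not_cond {D : DTheory} {S : TLit → Prop}
    (hS : ∀ P : List TLit, (∀ y ∈ P, ¬ S y) → ∀ t s q, S (t, s, q) → ¬ Cond D P t s q)
    {P : List TLit} (hP : ValidProof D P) : ∀ y ∈ P, ¬ S y := by
  induction hP with
  | nil => simp
  | @snoc P t s q _ hc ih =>
    intro y hy
    rcases List.mem_append.1 hy with hy | hy
    · exact ih y hy
    · rw [List.mem_singleton.1 hy]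
      exact fun hSy => hS P ih t s q hSy hc

section Example

def exampleTheory (a p : Lit) (sup : Rule → Rule → Prop) : DTheory :=
  ⟨∅, {⟨∅, a⟩, ⟨∅, a.neg⟩, ⟨∅, p⟩, ⟨{a}, p.neg⟩}, sup⟩

variable {a p : Lit} {sup : Rule → Rule → Prop}

theorem exampleTheory_injOn_head (hap : a.atom ≠ p.atom) :
    Set.InjOn Rule.head (exampleTheory a p sup).rules := by
  obtain ⟨i, b⟩ := a
  obtain ⟨j, c⟩ := p
  intro r hr s hs h
  simp only [exampleTheory, Finset.coe_insert, Finset.coe_singleton, Set.mem_insert_iff,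
    Set.mem_singleton_iff] at hr hs
  rcases hr with rfl | rfl | rfl | rfl <;> rcases hs with rfl | rfl | rfl | rfl <;>
    simp_all [Lit.neg]

theorem validProof_exampleTheory_of_sup (hap : a.atom ≠ p.atom)
    (h12 : sup ⟨∅, a⟩ ⟨∅, a.neg⟩) (h34 : ¬ sup ⟨∅, p⟩ ⟨{a}, p.neg⟩) :
    ValidProof (exampleTheory a p sup)
      [(.delta, false, a.neg), (.prt, true, a), (.prt, false, p)] := by
  have not_fact : Cond (exampleTheory a p sup) [] .delta false a.neg := Finset.notMem_empty _
  have plus_a : Cond (exampleTheory a p sup) [(.delta, false, a.neg)] .prt true a := by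
    refine Or.inr ⟨by simp, ⟨⟨∅, a⟩, by simp [exampleTheory], rfl, by simp⟩,
      fun s hs hs_head => ?_⟩
    obtain rfl : s = ⟨∅, a.neg⟩ := exampleTheory_injOn_head hap hs (by simp [exampleTheory]) hs_head
    exact Or.inr ⟨⟨∅, a⟩, by simp [exampleTheory], rfl, by simp, h12⟩
  have minus_p : Cond (exampleTheory a p sup) [(.delta, false, a.neg), (.prt, true, a)]
      .prt false p := by
    refine ⟨by simp, Or.inr (Or.inr ⟨⟨{a}, p.neg⟩, by simp [exampleTheory], rfl, by simp,
      fun t ht ht_head => ?_⟩)⟩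
    obtain rfl : t = ⟨∅, p⟩ := exampleTheory_injOn_head hap ht (by simp [exampleTheory]) ht_head
    exact Or.inr h34
  exact ((ValidProof.nil.snoc not_fact).snoc plus_a).snoc minus_p

theorem validProof_exampleTheory_of_not_sup (hap : a.atom ≠ p.atom)
    (h12 : ¬ sup ⟨∅, a⟩ ⟨∅, a.neg⟩) :
    ValidProof (exampleTheory a p sup)
      [(.prt, false, a), (.delta, false, p.neg), (.prt, true, p)] := by
  have minus_a : Cond (exampleTheory a p sup) [] .prt false a := by
    refine ⟨by simp, Or.inr (Or.inr ⟨⟨∅, a.neg⟩, by simp [exampleTheory], rfl, by simp,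
      fun t ht ht_head => ?_⟩)⟩
    obtain rfl : t = ⟨∅, a⟩ := exampleTheory_injOn_head hap ht (by simp [exampleTheory]) ht_head
    exact Or.inr h12
  have not_fact : Cond (exampleTheory a p sup) [(.prt, false, a)] .delta false p.neg :=
    Finset.notMem_empty _
  have plus_p : Cond (exampleTheory a p sup) [(.prt, false, a), (.delta, false, p.neg)]
      .prt true p := by
    refine Or.inr ⟨by simp, ⟨⟨∅, p⟩, by simp [exampleTheory], rfl, by simp⟩,
      fun s hs hs_head => ?_⟩
    obtain rfl : s = ⟨{a}, p.neg⟩ :=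
      exampleTheory_injOn_head hap hs (by simp [exampleTheory]) hs_head
    exact Or.inl ⟨a, by simp, by simp⟩
  exact ((ValidProof.nil.snoc minus_a).snoc not_fact).snoc plus_p

theorem not_cond_prt_false_of_sup (hap : a.atom ≠ p.atom) (h12 : sup ⟨∅, a⟩ ⟨∅, a.neg⟩)
    {P : List TLit} (hP : (.delta, true, a.neg) ∉ P) :
    ¬ Cond (exampleTheory a p sup) P .prt false a := by
  rintro ⟨-, h_fact | h_no_rule | ⟨s, hs, hs_head, -, h_defeated⟩⟩
  · exact hP h_fact
  · obtain ⟨x, hx, -⟩ := h_no_rule ⟨∅, a⟩ (by simp [exampleTheory]) rfl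
    simp at hx
  · obtain rfl : s = ⟨∅, a.neg⟩ := exampleTheory_injOn_head hap hs (by simp [exampleTheory]) hs_head
    rcases h_defeated ⟨∅, a⟩ (by simp [exampleTheory]) rfl with ⟨x, hx, -⟩ | h
    · simp at hx
    · exact h h12

theorem not_cond_prt_true_of_not_sup (hap : a.atom ≠ p.atom)
    (h34 : ¬ sup ⟨∅, p⟩ ⟨{a}, p.neg⟩) {P : List TLit} (hp : (.delta, true, p) ∉ P)
    (ha : (.prt, false, a) ∉ P) :
    ¬ Cond (exampleTheory a p sup) P .prt true p := by
  rintro (h_fact | ⟨-, -, h_attack⟩)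
  · exact hp h_fact
  rcases h_attack ⟨{a}, p.neg⟩ (by simp [exampleTheory]) rfl with
    ⟨x, hx, hx_minus⟩ | ⟨t, ht, ht_head, -, h⟩
  · rw [Finset.mem_singleton.1 hx] at hx_minus
    exact ha hx_minus
  · obtain rfl : t = ⟨∅, p⟩ := exampleTheory_injOn_head hap ht (by simp [exampleTheory]) ht_head
    exact h34 h

theorem not_proves_prt_true_of_sup (hap : a.atom ≠ p.atom) (h12 : sup ⟨∅, a⟩ ⟨∅, a.neg⟩)
    (h34 : ¬ sup ⟨∅, p⟩ ⟨{a}, p.neg⟩) :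
    ¬ Proves (exampleTheory a p sup) .prt true p := by
  rintro ⟨P, hP, hpP⟩
  refine hP.forall_not_of_not_cond (S := (· ∈ [(.delta, true, a.neg), (.delta, true, p),
    (.prt, false, a), (.prt, true, p)])) ?_ _ hpP (by simp)
  intro P hP t s q hS
  have avoids : ∀ y ∈ [((.delta, true, a.neg) : TLit), (.delta, true, p), (.prt, false, a)],
      y ∉ P := fun y hy hyP => hP y hyP (by simp at hy ⊢; tauto)
  simp only [List.mem_cons, Prod.mk.injEq, List.not_mem_nil, or_false] at hS
  rcases hS with ⟨rfl, rfl, rfl⟩ | ⟨rfl, rfl, rfl⟩ | ⟨rfl, rfl, rfl⟩ | ⟨rfl, rfl, rfl⟩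
  · exact Finset.notMem_empty _
  · exact Finset.notMem_empty _
  · exact not_cond_prt_false_of_sup hap h12 (avoids _ (by simp))
  · exact not_cond_prt_true_of_not_sup hap h34 (avoids _ (by simp)) (avoids _ (by simp))

end Example

end DL

open DL in
/-- AGM postulate (K−2) fails: with rules `⇒ a`, `⇒ ¬a`, `⇒ p`, `a ⇒ ¬p` and
`> = {(r1, r2)}`, `D` proves `+∂ a` and `−∂ p`, while the contraction with
empty superiority relation proves `−∂ a` and `+∂ p`, so
`BS⁺(D−_a) ⊄ BS⁺(D)`. -/
theorem stmt17 (a p : Lit) (hap : a.atom ≠ p.atom)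
    (r1 r2 r3 r4 : Rule)
    (h1 : r1 = ⟨∅, a⟩) (h2 : r2 = ⟨∅, a.neg⟩)
    (h3 : r3 = ⟨∅, p⟩) (h4 : r4 = ⟨{a}, p.neg⟩)
    (D Dc : DTheory)
    (hD : D = ⟨∅, {r1, r2, r3, r4}, fun x y => x = r1 ∧ y = r2⟩)
    (hDc : Dc = ⟨∅, {r1, r2, r3, r4}, fun _ _ => False⟩) :
    Proves D .prt true a ∧ Proves D .prt false p ∧
    Proves Dc .prt false a ∧ Proves Dc .prt true p ∧
    ¬ BSplus Dc ⊆ BSplus D := by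
  subst h1 h2 h3 h4 hD hDc
  have h12 : (⟨∅, a⟩ : Rule) = ⟨∅, a⟩ ∧ (⟨∅, a.neg⟩ : Rule) = ⟨∅, a.neg⟩ := ⟨rfl, rfl⟩
  have h34 : ¬ ((⟨∅, p⟩ : Rule) = ⟨∅, a⟩ ∧ (⟨{a}, p.neg⟩ : Rule) = ⟨∅, a.neg⟩) :=
    fun h => hap (congrArg (Lit.atom ∘ Rule.head) h.1).symm
  have proof_D := validProof_exampleTheory_of_sup (sup := fun x y => x = ⟨∅, a⟩ ∧ y = ⟨∅, a.neg⟩)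
    hap h12 h34
  have proof_Dc := validProof_exampleTheory_of_not_sup (sup := fun _ _ => False) hap id
  have p_mem_BSplus_Dc : p ∈ BSplus (exampleTheory a p fun _ _ => False) :=
    ⟨Or.inr ⟨⟨∅, p⟩, by simp [exampleTheory], Or.inl rfl⟩, _, proof_Dc, by simp⟩
  refine ⟨⟨_, proof_D, by simp⟩, ⟨_, proof_D, by simp⟩, ⟨_, proof_Dc, by simp⟩,
    ⟨_, proof_Dc, by simp⟩, fun hsub => ?_⟩
  exact not_proves_prt_true_of_sup hap h12 h34 (hsub p_mem_BSplus_Dc).2
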